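/- arXiv:math/0004054 — 4 statements merged into one kernel-verified Lean document; each statement's English description precedes it below -/
import Mathlib

section
/- With R₁(τ) = √(E/W + W(τ−τ₀)²), the functions z₁ = Ṙ₁ and z₂(τ) = −E/(W²R₁(τ)) + τ(τ−τ₀)/R₁(τ) are solutions of the linearized equation z̈ + 3E z / R₁⁴ = 0, and their Wronskian z₁ż₂ − z₂ż₁ equals 1 identically; in particular z₁ and z₂ are linearly independent. -/
/-!
The equation `R̈ = E / R³` is invariant under time translations and under the scalings
`R(τ) ↦ λ R(τ / λ²)`. Differentiating these one-parameter families of solutions gives the solutions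
`Ṙ` and `2τṘ - R` of the linearized equation, and `z₂ = ((2τ - τ₀) Ṙ₁ - R₁) / W` is a combination of
them. The Wronskian of `Ṙ` and `(a + 2bτ) Ṙ - b R` is `b (Ṙ² + E / R²)`, `b` times the conserved
energy, which for `R₁` equals `W`.
-/

open Real

/-- `a` times the time-translation mode `Ṙ` plus `b` times the scaling mode `2τṘ - R`. -/
noncomputable def symmetrySolution (R : ℝ → ℝ) (a b : ℝ) (τ : ℝ) : ℝ :=
  (a + 2 * b * τ) * deriv R τ - b * R τ

section Linearization

variable {E : ℝ} {R : ℝ → ℝ}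

theorem hasDerivAt_const_div_pow_three {τ : ℝ} (hR : DifferentiableAt ℝ R τ) (hR0 : R τ ≠ 0) :
    HasDerivAt (fun t => E / R t ^ 3) (-3 * E * deriv R τ / R τ ^ 4) τ := by
  refine ((hasDerivAt_const τ E).div (hR.hasDerivAt.pow 3) (pow_ne_zero 3 hR0)).congr_deriv ?_
  simp only [Pi.pow_apply, Nat.cast_ofNat]
  field_simp
  ring

variable (hR : Differentiable ℝ R) (hR'' : ∀ τ, HasDerivAt (deriv R) (E / R τ ^ 3) τ)
include hR hR''

theorem hasDerivAt_symmetrySolution (a b τ : ℝ) :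
    HasDerivAt (symmetrySolution R a b)
      (b * deriv R τ + (a + 2 * b * τ) * (E / R τ ^ 3)) τ := by
  have hlin : HasDerivAt (fun t => a + 2 * b * t) (2 * b) τ := by
    simpa using ((hasDerivAt_id τ).const_mul (2 * b)).const_add a
  exact ((hlin.mul (hR'' τ)).sub ((hR τ).hasDerivAt.const_mul b)).congr_deriv (by ring)

theorem symmetrySolution_linearized (hR0 : ∀ τ, R τ ≠ 0) (a b τ : ℝ) :
    deriv (deriv (symmetrySolution R a b)) τ + 3 * E * symmetrySolution R a b τ / R τ ^ 4 = 0 := by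
  have hderiv : deriv (symmetrySolution R a b) =
      fun t => b * deriv R t + (a + 2 * b * t) * (E / R t ^ 3) :=
    funext fun t => (hasDerivAt_symmetrySolution hR hR'' a b t).deriv
  have hlin : HasDerivAt (fun t => a + 2 * b * t) (2 * b) τ := by
    simpa using ((hasDerivAt_id τ).const_mul (2 * b)).const_add a
  have h2 : HasDerivAt (fun t => b * deriv R t + (a + 2 * b * t) * (E / R t ^ 3))
      (b * (E / R τ ^ 3) +
        (2 * b * (E / R τ ^ 3) + (a + 2 * b * τ) * (-3 * E * deriv R τ / R τ ^ 4))) τ :=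
    ((hR'' τ).const_mul b).add (hlin.mul (hasDerivAt_const_div_pow_three (hR τ) (hR0 τ)))
  rw [hderiv, h2.deriv, symmetrySolution]
  have := hR0 τ
  field_simp
  ring

theorem wronskian_deriv_symmetrySolution (hR0 : ∀ τ, R τ ≠ 0) (a b τ : ℝ) :
    deriv R τ * deriv (symmetrySolution R a b) τ - symmetrySolution R a b τ * deriv (deriv R) τ =
      b * (deriv R τ ^ 2 + E / R τ ^ 2) := by
  rw [(hasDerivAt_symmetrySolution hR hR'' a b τ).deriv, (hR'' τ).deriv, symmetrySolution]
  have := hR0 τ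
  field_simp
  ring

end Linearization

theorem eq_zero_of_wronskian_ne_zero {f g : ℝ → ℝ} (hf : Differentiable ℝ f)
    (hg : Differentiable ℝ g) {τ : ℝ} (hw : f τ * deriv g τ - g τ * deriv f τ ≠ 0) {a b : ℝ}
    (h : ∀ t, a * f t + b * g t = 0) : a = 0 ∧ b = 0 := by
  have hsum : HasDerivAt (fun t => a * f t + b * g t) (a * deriv f τ + b * deriv g τ) τ :=
    ((hf τ).hasDerivAt.const_mul a).add ((hg τ).hasDerivAt.const_mul b)
  have hderiv : a * deriv f τ + b * deriv g τ = 0 := by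
    rw [← hsum.deriv, funext h, deriv_const]
  constructor
  · refine (mul_eq_zero.1 ?_).resolve_right hw
    linear_combination deriv g τ * h τ - g τ * hderiv
  · refine (mul_eq_zero.1 ?_).resolve_right hw
    linear_combination f τ * hderiv - deriv f τ * h τ

section ErmakovRadius

noncomputable def ermakovRadius (E W τ₀ τ : ℝ) : ℝ :=
  √(E / W + W * (τ - τ₀) ^ 2)

variable {E W : ℝ} (hE : 0 < E) (hW : 0 < W) (τ₀ : ℝ)
include hE hW

theorem ermakovRadius_pos (τ : ℝ) : 0 < ermakovRadius E W τ₀ τ :=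
  sqrt_pos.2 (by positivity)

theorem mul_ermakovRadius_sq (τ : ℝ) :
    W * ermakovRadius E W τ₀ τ ^ 2 = E + W ^ 2 * (τ - τ₀) ^ 2 := by
  rw [ermakovRadius, sq_sqrt (by positivity)]
  field_simp

theorem hasDerivAt_ermakovRadius (τ : ℝ) :
    HasDerivAt (ermakovRadius E W τ₀) (W * (τ - τ₀) / ermakovRadius E W τ₀ τ) τ := by
  have hq : HasDerivAt (fun t => E / W + W * (t - τ₀) ^ 2) (W * (2 * (τ - τ₀))) τ := by
    simpa using (((hasDerivAt_id τ).sub_const τ₀).pow 2).const_mul W |>.const_add (E / W)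
  refine (hq.sqrt (by positivity)).congr_deriv ?_
  have := (ermakovRadius_pos hE hW τ₀ τ).ne'
  unfold ermakovRadius at this ⊢
  field_simp

theorem deriv_ermakovRadius :
    deriv (ermakovRadius E W τ₀) = fun τ => W * (τ - τ₀) / ermakovRadius E W τ₀ τ :=
  funext fun τ => (hasDerivAt_ermakovRadius hE hW τ₀ τ).deriv

theorem hasDerivAt_deriv_ermakovRadius (τ : ℝ) :
    HasDerivAt (deriv (ermakovRadius E W τ₀)) (E / ermakovRadius E W τ₀ τ ^ 3) τ := by
  rw [deriv_ermakovRadius hE hW]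
  have hnum : HasDerivAt (fun t => W * (t - τ₀)) W τ := by
    simpa using ((hasDerivAt_id τ).sub_const τ₀).const_mul W
  refine (hnum.div (hasDerivAt_ermakovRadius hE hW τ₀ τ)
    (ermakovRadius_pos hE hW τ₀ τ).ne').congr_deriv ?_
  have := (ermakovRadius_pos hE hW τ₀ τ).ne'
  field_simp
  linear_combination mul_ermakovRadius_sq hE hW τ₀ τ

theorem ermakovRadius_energy (τ : ℝ) :
    deriv (ermakovRadius E W τ₀) τ ^ 2 + E / ermakovRadius E W τ₀ τ ^ 2 = W := by
  rw [(hasDerivAt_ermakovRadius hE hW τ₀ τ).deriv]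
  have := (ermakovRadius_pos hE hW τ₀ τ).ne'
  field_simp
  linear_combination -mul_ermakovRadius_sq hE hW τ₀ τ

end ErmakovRadius

theorem linearized_solutions (E W τ₀ : ℝ) (hE : 0 < E) (hW : 0 < W)
    (R₁ : ℝ → ℝ) (hR₁ : R₁ = fun τ => Real.sqrt (E / W + W * (τ - τ₀) ^ 2))
    (z₁ z₂ : ℝ → ℝ) (hz₁ : z₁ = deriv R₁)
    (hz₂ : z₂ = fun τ => -E / (W ^ 2 * R₁ τ) + τ * (τ - τ₀) / R₁ τ) :
    (∀ τ : ℝ, deriv (deriv z₁) τ + 3 * E * z₁ τ / R₁ τ ^ 4 = 0) ∧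
    (∀ τ : ℝ, deriv (deriv z₂) τ + 3 * E * z₂ τ / R₁ τ ^ 4 = 0) ∧
    (∀ τ : ℝ, z₁ τ * deriv z₂ τ - z₂ τ * deriv z₁ τ = 1) ∧
    (∀ c₁ c₂ : ℝ, (∀ τ : ℝ, c₁ * z₁ τ + c₂ * z₂ τ = 0) → c₁ = 0 ∧ c₂ = 0) := by
  obtain rfl : R₁ = ermakovRadius E W τ₀ := hR₁
  have hR : Differentiable ℝ (ermakovRadius E W τ₀) := fun τ =>
    (hasDerivAt_ermakovRadius hE hW τ₀ τ).differentiableAt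
  have hR'' := hasDerivAt_deriv_ermakovRadius hE hW τ₀
  have hR0 τ := (ermakovRadius_pos hE hW τ₀ τ).ne'
  have hz₁' : z₁ = symmetrySolution (ermakovRadius E W τ₀) 1 0 := by
    funext τ
    simp [hz₁, symmetrySolution]
  have hz₂' : z₂ = symmetrySolution (ermakovRadius E W τ₀) (-τ₀ / W) (1 / W) := by
    funext τ
    rw [hz₂, symmetrySolution, deriv_ermakovRadius hE hW]
    have := hR0 τ
    field_simp
    linear_combination mul_ermakovRadius_sq hE hW τ₀ τ
  have hwronskian τ : z₁ τ * deriv z₂ τ - z₂ τ * deriv z₁ τ = 1 := by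
    rw [hz₂', hz₁, wronskian_deriv_symmetrySolution hR hR'' hR0, ermakovRadius_energy hE hW]
    exact one_div_mul_cancel hW.ne'
  have hdiff a b : Differentiable ℝ (symmetrySolution (ermakovRadius E W τ₀) a b) := fun τ =>
    (hasDerivAt_symmetrySolution hR hR'' a b τ).differentiableAt
  refine ⟨?_, ?_, hwronskian, fun c₁ c₂ => ?_⟩
  · rw [hz₁']
    exact symmetrySolution_linearized hR hR'' hR0 1 0
  · rw [hz₂']
    exact symmetrySolution_linearized hR hR'' hR0 _ _
  · exact eq_zero_of_wronskian_ne_zero (hz₁' ▸ hdiff 1 0) (hz₂' ▸ hdiff _ _) (τ := 0)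
      (by rw [hwronskian]; exact one_ne_zero)
end

section
/- The kernel K(τ,σ) = ((τ−σ)/(R₁(τ)R₁(σ)))·(E/W + W(σ−τ₀)(τ−τ₀)) satisfies, for fixed σ ≥ 0 and τ ≥ σ: ∂²K/∂τ² + 3E·K/R₁(τ)⁴ = 0, K(σ,σ) = 0, and ∂K/∂τ(τ,σ)|_{τ=σ} = 1. -/
/-!
With `a = E / W` and `u = τ - τ₀` we have `R₁² = a + W u²`. The linearisation
`y'' + 3 W a y / R₁⁴ = 0` of the Ermakov–Pinney equation along `R₁` has the two explicit solutions
`y₁ = u / R₁` (which is `R₁' / W`) and `y₂ = (a - W u²) / R₁`, with derivatives `a / R₁³` and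
`-W u (3a + W u²) / R₁³`, hence with Wronskian `(a + W u²)² / R₁⁴ = 1`. The kernel is their
Cauchy function `K(τ, σ) = y₁(τ) y₂(σ) - y₂(τ) y₁(σ)`, which vanishes on the diagonal and, by the
Wronskian, has `τ`-derivative `1` there.
-/

noncomputable section

structure SolvesHill (V y y' : ℝ → ℝ) : Prop where
  hasDerivAt : ∀ t, HasDerivAt y (y' t) t
  hasDerivAt_deriv : ∀ t, HasDerivAt y' (-(V t * y t)) t

namespace SolvesHill

variable {V y y' y₁ y₁' y₂ y₂' : ℝ → ℝ}

theorem sub_mul_const (h₁ : SolvesHill V y₁ y₁') (h₂ : SolvesHill V y₂ y₂') (c₁ c₂ : ℝ) :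
    SolvesHill V (fun t => y₁ t * c₁ - y₂ t * c₂) (fun t => y₁' t * c₁ - y₂' t * c₂) where
  hasDerivAt t := ((h₁.hasDerivAt t).mul_const c₁).sub ((h₂.hasDerivAt t).mul_const c₂)
  hasDerivAt_deriv t :=
    (((h₁.hasDerivAt_deriv t).mul_const c₁).sub ((h₂.hasDerivAt_deriv t).mul_const c₂)).congr_deriv
      (by ring)

theorem deriv_eq (h : SolvesHill V y y') : deriv y = y' :=
  funext fun t => (h.hasDerivAt t).deriv

theorem deriv_deriv_add_mul_eq_zero (h : SolvesHill V y y') (t : ℝ) :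
    deriv (deriv y) t + V t * y t = 0 := by
  rw [h.deriv_eq, (h.hasDerivAt_deriv t).deriv, neg_add_cancel]

end SolvesHill

def pinneyRadius (a W τ₀ t : ℝ) : ℝ := √(a + W * (t - τ₀) ^ 2)

def pinneyOddMode (a W τ₀ t : ℝ) : ℝ := (t - τ₀) / pinneyRadius a W τ₀ t

def pinneyEvenMode (a W τ₀ t : ℝ) : ℝ := (a - W * (t - τ₀) ^ 2) / pinneyRadius a W τ₀ t

def pinneyPotential (a W τ₀ t : ℝ) : ℝ := 3 * (W * a) / pinneyRadius a W τ₀ t ^ 4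

def pinneyKernel (a W τ₀ t σ : ℝ) : ℝ :=
  pinneyOddMode a W τ₀ t * pinneyEvenMode a W τ₀ σ - pinneyEvenMode a W τ₀ t * pinneyOddMode a W τ₀ σ

section Pinney

variable {a W : ℝ}

theorem pinneyRadius_sq (τ₀ : ℝ) (ha : 0 < a) (hW : 0 ≤ W) (t : ℝ) :
    pinneyRadius a W τ₀ t ^ 2 = a + W * (t - τ₀) ^ 2 :=
  Real.sq_sqrt (by positivity)

theorem pinneyRadius_pos (τ₀ : ℝ) (ha : 0 < a) (hW : 0 ≤ W) (t : ℝ) : 0 < pinneyRadius a W τ₀ t :=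
  Real.sqrt_pos.mpr (by positivity)

theorem hasDerivAt_pinneyRadius (τ₀ : ℝ) (ha : 0 < a) (hW : 0 ≤ W) (t : ℝ) :
    HasDerivAt (pinneyRadius a W τ₀) (W * (t - τ₀) / pinneyRadius a W τ₀ t) t := by
  have hq : HasDerivAt (fun t => a + W * (t - τ₀) ^ 2) (W * (2 * (t - τ₀))) t := by
    simpa using ((((hasDerivAt_id t).sub_const τ₀).pow 2).const_mul W).const_add a
  exact (hq.sqrt (by positivity)).congr_deriv (by unfold pinneyRadius; ring)

theorem solvesHill_pinneyOddMode (τ₀ : ℝ) (ha : 0 < a) (hW : 0 ≤ W) :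
    SolvesHill (pinneyPotential a W τ₀) (pinneyOddMode a W τ₀)
      (fun t => a / pinneyRadius a W τ₀ t ^ 3) where
  hasDerivAt t := by
    have hu : HasDerivAt (fun t => t - τ₀) 1 t := (hasDerivAt_id' t).sub_const τ₀
    have hR0 := (pinneyRadius_pos τ₀ ha hW t).ne'
    have hsq := pinneyRadius_sq τ₀ ha hW t
    refine (hu.div (hasDerivAt_pinneyRadius τ₀ ha hW t) hR0).congr_deriv ?_
    generalize pinneyRadius a W τ₀ t = r at *
    -- express `a` through the radius, turning the identity into a polynomial one in `r`
    obtain rfl : a = r ^ 2 - W * (t - τ₀) ^ 2 := by linarith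
    field_simp
  hasDerivAt_deriv t := by
    have hR0 := (pinneyRadius_pos τ₀ ha hW t).ne'
    refine ((hasDerivAt_const t a).div ((hasDerivAt_pinneyRadius τ₀ ha hW t).fun_pow 3)
      (pow_ne_zero 3 hR0)).congr_deriv ?_
    unfold pinneyPotential pinneyOddMode
    field_simp
    ring

theorem solvesHill_pinneyEvenMode (τ₀ : ℝ) (ha : 0 < a) (hW : 0 ≤ W) :
    SolvesHill (pinneyPotential a W τ₀) (pinneyEvenMode a W τ₀)
      (fun t => -(W * (t - τ₀) * (3 * a + W * (t - τ₀) ^ 2)) / pinneyRadius a W τ₀ t ^ 3) where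
  hasDerivAt t := by
    have hu : HasDerivAt (fun t => t - τ₀) 1 t := (hasDerivAt_id' t).sub_const τ₀
    have hR0 := (pinneyRadius_pos τ₀ ha hW t).ne'
    have hsq := pinneyRadius_sq τ₀ ha hW t
    refine ((((hu.fun_pow 2).const_mul W).const_sub a).div (hasDerivAt_pinneyRadius τ₀ ha hW t)
      hR0).congr_deriv ?_
    generalize pinneyRadius a W τ₀ t = r at *
    obtain rfl : a = r ^ 2 - W * (t - τ₀) ^ 2 := by linarith
    field_simp
    ring
  hasDerivAt_deriv t := by
    have hu : HasDerivAt (fun t => t - τ₀) 1 t := (hasDerivAt_id' t).sub_const τ₀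
    have hR0 := (pinneyRadius_pos τ₀ ha hW t).ne'
    have hsq := pinneyRadius_sq τ₀ ha hW t
    have hN := ((hu.const_mul W).fun_mul (((hu.fun_pow 2).const_mul W).const_add (3 * a))).fun_neg
    refine (hN.div ((hasDerivAt_pinneyRadius τ₀ ha hW t).fun_pow 3)
      (pow_ne_zero 3 hR0)).congr_deriv ?_
    unfold pinneyPotential pinneyEvenMode
    generalize pinneyRadius a W τ₀ t = r at *
    obtain rfl : a = r ^ 2 - W * (t - τ₀) ^ 2 := by linarith
    field_simp
    ring

theorem pinneyKernel_self (τ₀ σ : ℝ) : pinneyKernel a W τ₀ σ σ = 0 := by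
  rw [pinneyKernel, mul_comm, sub_self]

theorem pinneyKernel_eq {τ₀ : ℝ} (σ : ℝ) (ha : 0 < a) (hW : 0 ≤ W) (t : ℝ) :
    pinneyKernel a W τ₀ t σ = (t - σ) * (a + W * (σ - τ₀) * (t - τ₀)) /
      (pinneyRadius a W τ₀ t * pinneyRadius a W τ₀ σ) := by
  have := (pinneyRadius_pos τ₀ ha hW t).ne'
  have := (pinneyRadius_pos τ₀ ha hW σ).ne'
  unfold pinneyKernel pinneyOddMode pinneyEvenMode
  field_simp
  ring

theorem solvesHill_pinneyKernel {τ₀ : ℝ} (σ : ℝ) (ha : 0 < a) (hW : 0 ≤ W) :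
    SolvesHill (pinneyPotential a W τ₀) (pinneyKernel a W τ₀ · σ)
      (fun t => a / pinneyRadius a W τ₀ t ^ 3 * pinneyEvenMode a W τ₀ σ -
        -(W * (t - τ₀) * (3 * a + W * (t - τ₀) ^ 2)) / pinneyRadius a W τ₀ t ^ 3 *
          pinneyOddMode a W τ₀ σ) :=
  (solvesHill_pinneyOddMode τ₀ ha hW).sub_mul_const (solvesHill_pinneyEvenMode τ₀ ha hW) _ _

theorem deriv_pinneyKernel_self {τ₀ : ℝ} (σ : ℝ) (ha : 0 < a) (hW : 0 ≤ W) :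
    deriv (pinneyKernel a W τ₀ · σ) σ = 1 := by
  have hR0 := (pinneyRadius_pos τ₀ ha hW σ).ne'
  have hsq := pinneyRadius_sq τ₀ ha hW σ
  rw [(solvesHill_pinneyKernel σ ha hW).deriv_eq]
  beta_reduce
  unfold pinneyOddMode pinneyEvenMode
  generalize pinneyRadius a W τ₀ σ = r at *
  field_simp
  linear_combination -(r ^ 2 + a + W * (σ - τ₀) ^ 2) * hsq

end Pinney

end

theorem kernel_properties_general (E W τ₀ : ℝ) (hE : 0 < E) (hW : 0 < W)
    (R₁ : ℝ → ℝ) (hR₁ : R₁ = fun τ => Real.sqrt (E / W + W * (τ - τ₀) ^ 2))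
    (K : ℝ → ℝ → ℝ)
    (hK : K = fun τ σ => (τ - σ) * (E / W + W * (σ - τ₀) * (τ - τ₀)) / (R₁ τ * R₁ σ))
    (σ : ℝ) :
    (∀ τ : ℝ, σ ≤ τ →
      deriv (deriv (fun t => K t σ)) τ + 3 * E * K τ σ / R₁ τ ^ 4 = 0) ∧
    K σ σ = 0 ∧ deriv (fun t => K t σ) σ = 1 := by
  have ha : 0 < E / W := div_pos hE hW
  have hR : R₁ = pinneyRadius (E / W) W τ₀ := hR₁
  have hKσ : (fun t => K t σ) = (pinneyKernel (E / W) W τ₀ · σ) := by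
    funext t
    rw [pinneyKernel_eq σ ha hW.le, hK, hR]
  refine ⟨fun τ _ => ?_, ?_, ?_⟩
  · rw [hKσ, show K τ σ = pinneyKernel (E / W) W τ₀ τ σ from congrFun hKσ τ]
    convert (solvesHill_pinneyKernel σ ha hW.le).deriv_deriv_add_mul_eq_zero τ using 2
    rw [pinneyPotential, hR, mul_div_cancel₀ E hW.ne']
    ring
  · rw [show K σ σ = pinneyKernel (E / W) W τ₀ σ σ from congrFun hKσ σ, pinneyKernel_self]
  · rw [hKσ, deriv_pinneyKernel_self σ ha hW.le]

theorem kernel_properties (E W τ₀ : ℝ) (hE : 0 < E) (hW : 0 < W)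
    (R₁ : ℝ → ℝ) (hR₁ : R₁ = fun τ => Real.sqrt (E / W + W * (τ - τ₀) ^ 2))
    (K : ℝ → ℝ → ℝ)
    (hK : K = fun τ σ => (τ - σ) * (E / W + W * (σ - τ₀) * (τ - τ₀)) / (R₁ τ * R₁ σ))
    (σ : ℝ) (hσ : 0 ≤ σ) :
    (∀ τ : ℝ, σ ≤ τ →
      deriv (deriv (fun t => K t σ)) τ + 3 * E * K τ σ / R₁ τ ^ 4 = 0) ∧
    K σ σ = 0 ∧ deriv (fun t => K t σ) σ = 1 :=
  kernel_properties_general E W τ₀ hE hW R₁ hR₁ K hK σ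
end

section
/- There is a constant δ (independent of W and τ₀) such that for all τ ∈ [0,1], the quantity I(τ) = (1/R₁(τ)) ∫₀^τ K(τ,σ)/R₁(σ)³ dσ satisfies |I(τ)| ≤ δ, provided τ₀ ≤ √E/W; in fact one may take δ depending only on E. -/
/-!
Writing `Q σ = E/W + W (σ - τ₀)²`, the integrand is `(τ - σ)(E/W + W (σ - τ₀)(τ - τ₀)) / Q σ²`
up to the factor `1 / √(Q τ)`, and it has the elementary antiderivative
`-(σ - τ)² / (2 Q σ)`. Hence `I(τ) = τ² / (2 Q τ Q 0)` exactly, and since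
`(a + W x²)(a + W y²) ≥ a W (x² + y²) ≥ a W (x - y)² / 2`, with `a W = E`, this is at most `1 / E`.
-/

open intervalIntegral

lemma sqrt_mul_sqrt_pow_three {q : ℝ} (hq : 0 ≤ q) : √q * √q ^ 3 = q ^ 2 := by
  rw [show √q * √q ^ 3 = (√q ^ 2) ^ 2 by ring, Real.sq_sqrt hq]

lemma mul_sq_sub_le_two_mul_mul (a W x y : ℝ) (ha : 0 ≤ a) (hW : 0 ≤ W) :
    a * W * (x - y) ^ 2 ≤ 2 * ((a + W * x ^ 2) * (a + W * y ^ 2)) := by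
  have hexpand : 2 * ((a + W * x ^ 2) * (a + W * y ^ 2)) - a * W * (x - y) ^ 2 =
      2 * a ^ 2 + a * W * (x + y) ^ 2 + 2 * (W * x * y) ^ 2 := by ring
  have : 0 ≤ 2 * a ^ 2 + a * W * (x + y) ^ 2 + 2 * (W * x * y) ^ 2 := by positivity
  linarith

section Kernel

variable {a W : ℝ} (τ₀ τ : ℝ)

lemma add_mul_sq_pos (ha : 0 < a) (hW : 0 ≤ W) (σ : ℝ) : 0 < a + W * (σ - τ₀) ^ 2 := by
  positivity

lemma hasDerivAt_kernel_antideriv (ha : 0 < a) (hW : 0 ≤ W) (σ : ℝ) :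
    HasDerivAt (fun σ => -(σ - τ) ^ 2 / (2 * (a + W * (σ - τ₀) ^ 2)))
      ((τ - σ) * (a + W * (σ - τ₀) * (τ - τ₀)) / (a + W * (σ - τ₀) ^ 2) ^ 2) σ := by
  have hQ := add_mul_sq_pos τ₀ ha hW σ
  have hnum : HasDerivAt (fun σ => -(σ - τ) ^ 2) (-(2 * (σ - τ) ^ 1 * 1)) σ :=
    (((hasDerivAt_id σ).sub_const τ).pow 2).neg
  have hden : HasDerivAt (fun σ => 2 * (a + W * (σ - τ₀) ^ 2))
      (2 * (W * (2 * (σ - τ₀) ^ 1 * 1))) σ :=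
    (((((hasDerivAt_id σ).sub_const τ₀).pow 2).const_mul W).const_add a).const_mul 2
  refine (hnum.div hden (by positivity)).congr_deriv ?_
  field_simp
  ring

lemma integral_kernel (ha : 0 < a) (hW : 0 ≤ W) (s : ℝ) :
    ∫ σ in s..τ, (τ - σ) * (a + W * (σ - τ₀) * (τ - τ₀)) / (a + W * (σ - τ₀) ^ 2) ^ 2 =
      (τ - s) ^ 2 / (2 * (a + W * (s - τ₀) ^ 2)) := by
  have hcont : Continuous fun σ =>
      (τ - σ) * (a + W * (σ - τ₀) * (τ - τ₀)) / (a + W * (σ - τ₀) ^ 2) ^ 2 :=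
    Continuous.div (by fun_prop) (by fun_prop) fun σ =>
      pow_ne_zero 2 (add_mul_sq_pos τ₀ ha hW σ).ne'
  rw [integral_eq_sub_of_hasDerivAt (fun σ _ => hasDerivAt_kernel_antideriv τ₀ τ ha hW σ)
    (hcont.intervalIntegrable s τ)]
  ring

lemma kernel_integral_eq (ha : 0 < a) (hW : 0 ≤ W) (s : ℝ) :
    (1 / √(a + W * (τ - τ₀) ^ 2)) *
        ∫ σ in s..τ,
          ((τ - σ) * (a + W * (σ - τ₀) * (τ - τ₀)) /
            (√(a + W * (τ - τ₀) ^ 2) * √(a + W * (σ - τ₀) ^ 2))) /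
          √(a + W * (σ - τ₀) ^ 2) ^ 3 =
      (τ - s) ^ 2 / (2 * ((a + W * (τ - τ₀) ^ 2) * (a + W * (s - τ₀) ^ 2))) := by
  set R := √(a + W * (τ - τ₀) ^ 2)
  have hRsq : R ^ 2 = a + W * (τ - τ₀) ^ 2 := Real.sq_sqrt (add_mul_sq_pos τ₀ ha hW τ).le
  have hintegrand : ∀ σ,
      ((τ - σ) * (a + W * (σ - τ₀) * (τ - τ₀)) / (R * √(a + W * (σ - τ₀) ^ 2))) /
          √(a + W * (σ - τ₀) ^ 2) ^ 3 =
        (1 / R) * ((τ - σ) * (a + W * (σ - τ₀) * (τ - τ₀)) / (a + W * (σ - τ₀) ^ 2) ^ 2) := by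
    intro σ
    rw [div_div, mul_assoc R, sqrt_mul_sqrt_pow_three (add_mul_sq_pos τ₀ ha hW σ).le]
    field_simp
  simp_rw [hintegrand, integral_const_mul, integral_kernel τ₀ τ ha hW s, ← hRsq]
  field_simp

end Kernel

theorem I_bounded (E : ℝ) (hE : 0 < E) :
    ∃ δ : ℝ, ∀ W τ₀ : ℝ, 0 < W → τ₀ ∈ Set.Icc 0 (Real.sqrt E / W) →
      ∀ τ ∈ Set.Icc (0 : ℝ) 1,
        |(1 / Real.sqrt (E / W + W * (τ - τ₀) ^ 2)) *
          ∫ σ in (0 : ℝ)..τ,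
            ((τ - σ) * (E / W + W * (σ - τ₀) * (τ - τ₀)) /
              (Real.sqrt (E / W + W * (τ - τ₀) ^ 2) *
                Real.sqrt (E / W + W * (σ - τ₀) ^ 2))) /
            Real.sqrt (E / W + W * (σ - τ₀) ^ 2) ^ 3| ≤ δ := by
  refine ⟨1 / E, fun W τ₀ hW _ τ _ => ?_⟩
  have ha : 0 < E / W := div_pos hE hW
  have haW : E / W * W = E := div_mul_cancel₀ E hW.ne'
  rw [kernel_integral_eq τ₀ τ ha hW.le, abs_of_nonneg (by positivity),
    div_le_div_iff₀ (by positivity) hE, one_mul, mul_comm]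
  have hbound := mul_sq_sub_le_two_mul_mul (E / W) W (τ - τ₀) (0 - τ₀) ha.le hW.le
  rw [haW] at hbound
  simpa using hbound
end

section
/- Along a positive solution R of R̈ + 2αṘ + R = E(1−ε)²/R³, if Ṙ(τ₁) − ξ₁R(τ₁) ≥ 0, then for all τ ≥ τ₁ one has Ṙ(τ) − ξ₁R(τ) ≥ 0; indeed the quantity g = Ṙ − ξ₁R satisfies ġ = ξ₂g + E(1−ε)²/R³ and hence g(τ) = e^{ξ₂(τ−τ₁)}g(τ₁) + ∫_{τ₁}^τ e^{ξ₂(τ−σ)} E(1−ε)²/R(σ)³ dσ ≥ 0. -/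
/-!
Since ξ₁ and ξ₂ are the roots of x² + 2αx + 1, the equation factors as
(d/dτ − ξ₂)(d/dτ − ξ₁)R = E(1−ε)²/R³, so g = Ṙ − ξ₁R solves the first-order equation
ġ = ξ₂g + E(1−ε)²/R³. Variation of constants gives the integral formula, whose two terms are
nonnegative.
-/

open Real Set intervalIntegral

theorem HasDerivAt.sub_mul_of_factored_second_order {R R' : ℝ → ℝ} {ξ₁ ξ₂ F t : ℝ}
    (hR : HasDerivAt R (R' t) t)
    (hR' : HasDerivAt R' ((ξ₁ + ξ₂) * R' t - ξ₁ * ξ₂ * R t + F) t) :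
    HasDerivAt (fun s => R' s - ξ₁ * R s) (ξ₂ * (R' t - ξ₁ * R t) + F) t :=
  (hR'.sub (hR.const_mul ξ₁)).congr_deriv (by ring)

theorem eq_exp_mul_add_integral_of_hasDerivAt {g f : ℝ → ℝ} {a b c : ℝ} (hab : a ≤ b)
    (hg : ∀ t ∈ Icc a b, HasDerivAt g (c * g t + f t) t) (hf : ContinuousOn f (Icc a b)) :
    g b = exp (c * (b - a)) * g a + ∫ s in a..b, exp (c * (b - s)) * f s := by
  have hweighted : ∀ t ∈ uIcc a b,
      HasDerivAt (fun s => exp (c * (b - s)) * g s) (exp (c * (b - t)) * f t) t := by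
    intro t ht
    rw [uIcc_of_le hab] at ht
    have hexp : HasDerivAt (fun s => exp (c * (b - s))) (exp (c * (b - t)) * -c) t := by
      simpa using (((hasDerivAt_id t).const_sub b).const_mul c).exp
    exact (hexp.mul (hg t ht)).congr_deriv (by ring)
  have hint : IntervalIntegrable (fun s => exp (c * (b - s)) * f s) MeasureTheory.volume a b :=
    ContinuousOn.intervalIntegrable <| by
      rw [uIcc_of_le hab]
      exact (continuous_exp.comp (continuous_const.mul
        (continuous_const.sub continuous_id))).continuousOn.mul hf
  rw [integral_eq_sub_of_hasDerivAt hweighted hint]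
  simp

theorem dissipation_inequality_general (α E ε τ₁ : ℝ) (hα : 1 < α) (hE : 0 < E)
    (Δ ξ₁ ξ₂ : ℝ) (hΔ : Δ = α ^ 2 - 1)
    (hξ₁ : ξ₁ = -α + Real.sqrt Δ) (hξ₂ : ξ₂ = -α - Real.sqrt Δ)
    (R R' : ℝ → ℝ)
    (hpos : ∀ τ : ℝ, τ₁ ≤ τ → 0 < R τ)
    (hR : ∀ τ : ℝ, τ₁ ≤ τ → HasDerivAt R (R' τ) τ)
    (hR' : ∀ τ : ℝ, τ₁ ≤ τ →
      HasDerivAt R' (-2 * α * R' τ - R τ + E * (1 - ε) ^ 2 / R τ ^ 3) τ)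
    (hinit : 0 ≤ R' τ₁ - ξ₁ * R τ₁) :
    ∀ τ : ℝ, τ₁ ≤ τ →
      (R' τ - ξ₁ * R τ =
        Real.exp (ξ₂ * (τ - τ₁)) * (R' τ₁ - ξ₁ * R τ₁) +
          ∫ σ in τ₁..τ, Real.exp (ξ₂ * (τ - σ)) * (E * (1 - ε) ^ 2 / R σ ^ 3)) ∧
      0 ≤ R' τ - ξ₁ * R τ := by
  have hsqrt : sqrt Δ ^ 2 = α ^ 2 - 1 := by rw [sq_sqrt (by nlinarith), hΔ]
  have hsum : ξ₁ + ξ₂ = -2 * α := by rw [hξ₁, hξ₂]; ring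
  have hprod : ξ₁ * ξ₂ = 1 := by rw [hξ₁, hξ₂]; linear_combination -hsqrt
  intro τ hτ
  have hRcont : ContinuousOn R (Icc τ₁ τ) := fun t ht =>
    (hR t ht.1).continuousAt.continuousWithinAt
  have hforcing : ContinuousOn (fun σ => E * (1 - ε) ^ 2 / R σ ^ 3) (Icc τ₁ τ) :=
    continuousOn_const.div (hRcont.pow 3) fun t ht => pow_ne_zero 3 (hpos t ht.1).ne'
  have hg : ∀ t ∈ Icc τ₁ τ, HasDerivAt (fun s => R' s - ξ₁ * R s)
      (ξ₂ * (R' t - ξ₁ * R t) + E * (1 - ε) ^ 2 / R t ^ 3) t := fun t ht =>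
    (hR t ht.1).sub_mul_of_factored_second_order
      ((hR' t ht.1).congr_deriv (by rw [hsum, hprod]; ring))
  have heq := eq_exp_mul_add_integral_of_hasDerivAt hτ hg hforcing
  refine ⟨heq, heq ▸ add_nonneg (mul_nonneg (exp_pos _).le hinit)
    (integral_nonneg hτ fun σ hσ => ?_)⟩
  have := hpos σ hσ.1
  positivity

theorem dissipation_inequality (α E ε τ₁ : ℝ) (hα : 1 < α) (hE : 0 < E)
    (hε : ε ∈ Set.Ico (0 : ℝ) 1)
    (Δ ξ₁ ξ₂ : ℝ) (hΔ : Δ = α ^ 2 - 1)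
    (hξ₁ : ξ₁ = -α + Real.sqrt Δ) (hξ₂ : ξ₂ = -α - Real.sqrt Δ)
    (R R' : ℝ → ℝ)
    (hpos : ∀ τ : ℝ, τ₁ ≤ τ → 0 < R τ)
    (hR : ∀ τ : ℝ, τ₁ ≤ τ → HasDerivAt R (R' τ) τ)
    (hR' : ∀ τ : ℝ, τ₁ ≤ τ →
      HasDerivAt R' (-2 * α * R' τ - R τ + E * (1 - ε) ^ 2 / R τ ^ 3) τ)
    (hinit : 0 ≤ R' τ₁ - ξ₁ * R τ₁) :
    ∀ τ : ℝ, τ₁ ≤ τ →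
      (R' τ - ξ₁ * R τ =
        Real.exp (ξ₂ * (τ - τ₁)) * (R' τ₁ - ξ₁ * R τ₁) +
          ∫ σ in τ₁..τ, Real.exp (ξ₂ * (τ - σ)) * (E * (1 - ε) ^ 2 / R σ ^ 3)) ∧
      0 ≤ R' τ - ξ₁ * R τ :=
  dissipation_inequality_general α E ε τ₁ hα hE Δ ξ₁ ξ₂ hΔ hξ₁ hξ₂ R R' hpos hR hR' hinit
end
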